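/- arXiv:2511.14563 — 3 statements merged into one kernel-verified Lean document; each statement's English description precedes it below -/
import Mathlib

section
/- Let q > 1 be a real number, let α ∈ ℂ with |α| = 1, and let σ, σ0 be real numbers with σ ≥ σ0 > 1/2. Then | α^{−1}·q^{σ−1/2} / (1 − α^{−1}·q^{σ−1/2})² | ≤ (1/((σ0 − 1/2)·log q)) · Re( 1/(1 − α·q^{1/2−σ0}) ). -/
/-! With `r = q^(σ-1/2)`, `r₀ = q^(σ₀-1/2)` and `c = Re α`, both sides are governed by
`|r - α|² = r² - 2cr + 1`: the left side equals `r / |r - α|²`, which decreases in `r > 1`,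
and the right side equals `(r₀ - c) / log r₀ · r₀ / |r₀ - α|²`, where `(r₀ - c) / log r₀ ≥ 1`
because `log r₀ ≤ r₀ - 1`. -/

open scoped Classical

noncomputable section

namespace Complex

variable {α : ℂ}

theorem normSq_ofReal_sub_of_norm_eq_one (hα : ‖α‖ = 1) (r : ℝ) :
    normSq (r - α) = r ^ 2 - 2 * α.re * r + 1 := by
  have hre_im : α.re ^ 2 + α.im ^ 2 = 1 := by
    have h := normSq_eq_norm_sq α
    rw [hα, normSq_apply] at h
    linear_combination h
  rw [normSq_apply]
  simp only [sub_re, sub_im, ofReal_re, ofReal_im]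
  linear_combination hre_im

theorem norm_inv_mul_div_one_sub_inv_mul_sq (hα : ‖α‖ = 1) {r : ℝ} (hr : 0 < r) :
    ‖α⁻¹ * r / (1 - α⁻¹ * r) ^ 2‖ = r / normSq (r - α) := by
  have hα0 : α ≠ 0 := norm_ne_zero_iff.mp (by rw [hα]; exact one_ne_zero)
  have hrewrite : α⁻¹ * r / (1 - α⁻¹ * r) ^ 2 = α * r / (r - α) ^ 2 := by
    rw [show 1 - α⁻¹ * r = α⁻¹ * -(r - α) by field_simp; ring]
    field_simp
  rw [hrewrite, norm_div, norm_mul, norm_pow, hα, norm_real, Real.norm_of_nonneg hr.le,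
    ← normSq_eq_norm_sq, one_mul]

theorem re_one_div_one_sub_mul_inv {r : ℝ} (hr : r ≠ 0) :
    (1 / (1 - α * (r⁻¹ : ℝ))).re = r * (r - α.re) / normSq (r - α) := by
  have hr' : (r : ℂ) ≠ 0 := ofReal_ne_zero.mpr hr
  have hrewrite : 1 / (1 - α * (r⁻¹ : ℝ)) = r * (r - α)⁻¹ := by
    rw [show 1 - α * (r⁻¹ : ℝ) = (r - α) * (r : ℂ)⁻¹ by push_cast; field_simp,
      one_div, mul_inv, inv_inv, mul_comm]
  rw [hrewrite, re_ofReal_mul, inv_re, sub_re, ofReal_re, mul_div_assoc]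

end Complex

theorem div_sq_sub_two_mul_add_one_le_of_le {c a b : ℝ} (hc : c ≤ 1) (ha : 1 < a) (hab : a ≤ b) :
    b / (b ^ 2 - 2 * c * b + 1) ≤ a / (a ^ 2 - 2 * c * a + 1) := by
  have hDa : 0 < a ^ 2 - 2 * c * a + 1 := by nlinarith
  have hDb : 0 < b ^ 2 - 2 * c * b + 1 := by nlinarith
  rw [div_le_div_iff₀ hDb hDa]
  nlinarith [mul_nonneg (sub_nonneg.mpr hab) (show 0 ≤ a * b - 1 by nlinarith)]

theorem div_sq_sub_two_mul_add_one_le_mul_div_log {c r : ℝ} (hc : c ≤ 1) (hr : 1 < r) :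
    r / (r ^ 2 - 2 * c * r + 1) ≤ 1 / Real.log r * (r * (r - c) / (r ^ 2 - 2 * c * r + 1)) := by
  have hlog : 0 < Real.log r := Real.log_pos hr
  have hlog_le : Real.log r ≤ r - c := by linarith [Real.log_le_sub_one_of_pos (by linarith : 0 < r)]
  have hD : 0 < r ^ 2 - 2 * c * r + 1 := by nlinarith
  calc r / (r ^ 2 - 2 * c * r + 1)
      = Real.log r * (r / (r ^ 2 - 2 * c * r + 1)) / Real.log r := by field_simp
    _ ≤ (r - c) * (r / (r ^ 2 - 2 * c * r + 1)) / Real.log r := by gcongr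
    _ = _ := by ring

/-- Altuğ–Tsimerman type lemma, generalized to real `q > 1`:
`|α⁻¹ q^{σ-1/2} / (1 - α⁻¹ q^{σ-1/2})²| ≤ (1/((σ0-1/2) log q)) · Re(1/(1 - α q^{1/2-σ0}))`
for `|α| = 1` and `σ ≥ σ0 > 1/2`. -/
theorem statement10 (q : ℝ) (hq : 1 < q) (α : ℂ) (hα : ‖α‖ = 1)
    (σ σ0 : ℝ) (hσ : σ0 ≤ σ) (hσ0 : 1 / 2 < σ0) :
    ‖α⁻¹ * ((q ^ (σ - 1 / 2) : ℝ) : ℂ)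
        / (1 - α⁻¹ * ((q ^ (σ - 1 / 2) : ℝ) : ℂ)) ^ 2‖
      ≤ 1 / ((σ0 - 1 / 2) * Real.log q)
          * (1 / (1 - α * ((q ^ (1 / 2 - σ0) : ℝ) : ℂ))).re := by
  have hq0 : 0 < q := by linarith
  set r := q ^ (σ - 1 / 2)
  set r₀ := q ^ (σ0 - 1 / 2)
  have hr₀ : 1 < r₀ := Real.one_lt_rpow hq (by linarith)
  have hr₀r : r₀ ≤ r := Real.rpow_le_rpow_of_exponent_le hq.le (by linarith)
  have hinv : q ^ (1 / 2 - σ0) = r₀⁻¹ := by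
    rw [← Real.rpow_neg hq0.le, neg_sub]
  have hc : α.re ≤ 1 := (Complex.re_le_norm α).trans hα.le
  rw [Complex.norm_inv_mul_div_one_sub_inv_mul_sq hα (by linarith), hinv,
    Complex.re_one_div_one_sub_mul_inv (by linarith), ← Real.log_rpow hq0,
    Complex.normSq_ofReal_sub_of_norm_eq_one hα, Complex.normSq_ofReal_sub_of_norm_eq_one hα]
  exact (div_sq_sub_two_mul_add_one_le_of_le hc hr₀ hr₀r).trans
    (div_sq_sub_two_mul_add_one_le_mul_div_log hc hr₀)

end
end

section
/- Let q ≥ 2 be real, let κ ≥ 1 be an integer, let η ∈ {0, 1}, and let α_1, …, α_κ ∈ ℂ with |α_j| = 1 for all j. Define F(s) = (log q)·( η·q^{−s}/(1 − q^{−s}) − κ + Σ_{j=1}^κ 1/(1 − α_j·q^{1/2−s}) ) for complex s that is not a pole. Then for every integer X ≥ 1, every t ∈ ℝ and all real σ ≥ σ0 > 1/2: Σ_{j=1}^κ | (α_j·q^{1/2−σ−it})^X·(1 − (α_j·q^{1/2−σ−it})^X)² / (1 − α_j^{−1}·q^{σ−1/2+it})³ | ≤ (4·q^{X(1/2−σ)}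 / ((σ0 − 1/2)²·log³ q)) · ( |Re F(σ0 + it)| + 3κ·log q ). -/
open scoped Classical BigOperators

noncomputable section

/-- `F(s) = (log q)·(η q^{-s}/(1-q^{-s}) - κ + Σ_j 1/(1 - α_j q^{1/2-s}))`, which is
`L'/L(s)` for `L(s) = (1-q^{-s})^η ∏_j (1 - α_j q^{1/2-s})`. -/
def Ffun (q : ℝ) (κ η : ℕ) (α : Fin κ → ℂ) (s : ℂ) : ℂ :=
  (Real.log q : ℂ) * ((η : ℂ) * (q : ℂ) ^ (-s) / (1 - (q : ℂ) ^ (-s)) - (κ : ℂ)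
    + ∑ j, 1 / (1 - α j * (q : ℂ) ^ ((1 : ℂ) / 2 - s)))

/-!
With `z_j = α_j q^{1/2-σ-it}` the denominator is `(1 - 1/z_j)^3`, so the `j`-th term has norm at
most `4 |z_j|^X (|z_j| / |1 - z_j|)^3`. Writing `w_j = α_j q^{1/2-σ0-it}` and `z_j = d w_j` with
`d = q^{σ0-σ} ≤ 1`, the factor `(|z_j| / |1 - z_j|)^3` is bounded by `Re (1/(1-w_j)) / log² |w_j|`,
using `Re (1/(1-w)) ≥ (1-|w|)/|1-w|²` and `r³ log² r ≤ (1-r)²` for `r = |w_j| < 1`. Finally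
`log q · Σ_j Re (1/(1-w_j))` is `Re F(σ0+it)` up to the terms `-κ log q` and
`η log q · Re (q^{-s}/(1-q^{-s})) ≥ -η log q`.
-/

lemma Real.pow_three_mul_log_sq_le {r : ℝ} (hr0 : 0 < r) (hr1 : r ≤ 1) :
    r ^ 3 * Real.log r ^ 2 ≤ (1 - r) ^ 2 := by
  have hlower : r - 1 ≤ r * Real.log r := by
    calc r - 1 = r * (1 - r⁻¹) := by field_simp
      _ ≤ r * Real.log r := by gcongr; exact Real.one_sub_inv_le_log_of_pos hr0
  have hnonpos : r * Real.log r ≤ 0 :=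
    mul_nonpos_of_nonneg_of_nonpos hr0.le (Real.log_nonpos hr0.le hr1)
  calc r ^ 3 * Real.log r ^ 2 = r * (r * Real.log r) ^ 2 := by ring
    _ ≤ 1 * (1 - r) ^ 2 := mul_le_mul hr1 (by nlinarith) (sq_nonneg _) zero_le_one
    _ = (1 - r) ^ 2 := one_mul _

namespace Complex

lemma one_sub_norm_div_sq_le_re_one_div (v : ℂ) :
    (1 - ‖v‖) / ‖1 - v‖ ^ 2 ≤ (1 / (1 - v)).re := by
  rw [one_div, inv_re, sub_re, one_re, ← Complex.sq_norm]
  gcongr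
  exact re_le_norm v

lemma re_one_div_one_sub_nonneg {v : ℂ} (hv : ‖v‖ ≤ 1) : 0 ≤ (1 / (1 - v)).re :=
  (div_nonneg (by linarith) (sq_nonneg _)).trans (one_sub_norm_div_sq_le_re_one_div v)

lemma neg_one_le_re_div_one_sub {u : ℂ} (hu : ‖u‖ ≤ 1) : -1 ≤ (u / (1 - u)).re := by
  rcases eq_or_ne u 1 with rfl | hu1
  · simp
  · have hsplit : u / (1 - u) = 1 / (1 - u) - 1 := by
      field_simp [sub_ne_zero.2 hu1.symm]
      ring
    rw [hsplit, sub_re, one_re]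
    linarith [re_one_div_one_sub_nonneg hu]

lemma mul_norm_one_sub_sq_le {d : ℝ} (hd1 : d ≤ 1) {w : ℂ} (hw : ‖w‖ ≤ 1) :
    d * ‖1 - w‖ ^ 2 ≤ ‖1 - d * w‖ ^ 2 := by
  have hdw : d * (w.re ^ 2 + w.im ^ 2) ≤ 1 := by
    refine mul_le_one₀ hd1 (by positivity) ?_
    have : ‖w‖ ^ 2 = w.re ^ 2 + w.im ^ 2 := by rw [Complex.sq_norm, normSq_apply]; ring
    nlinarith [norm_nonneg w]
  simp only [Complex.sq_norm, normSq_apply, sub_re, sub_im, one_re, one_im, mul_re, mul_im, ofReal_re,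
    ofReal_im]
  -- the difference of the two sides is `(1 - d) (1 - d |w|²)`
  nlinarith [mul_nonneg (sub_nonneg.2 hd1) (sub_nonneg.2 hdw)]

lemma norm_div_norm_one_sub_pow_three_le {w : ℂ} (hw0 : 0 < ‖w‖) (hw1 : ‖w‖ < 1)
    {d : ℝ} (hd0 : 0 < d) (hd1 : d ≤ 1) :
    (‖d * w‖ / ‖1 - d * w‖) ^ 3 ≤ (1 / (1 - w)).re / Real.log ‖w‖ ^ 2 := by
  set r := ‖w‖
  set R := (1 / (1 - w)).re
  have hdw : ‖(d : ℂ) * w‖ = d * r := by simp [r, abs_of_pos hd0]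
  have hsub : 1 - r ≤ ‖1 - d * w‖ := by
    have := norm_sub_norm_le (1 : ℂ) (d * w)
    rw [norm_one, hdw] at this
    nlinarith
  have hR : 1 - r ≤ R * ‖1 - w‖ ^ 2 := by
    have hpos : 0 < ‖1 - w‖ := by
      have := norm_sub_norm_le (1 : ℂ) w
      rw [norm_one] at this
      linarith
    have := one_sub_norm_div_sq_le_re_one_div w
    rwa [div_le_iff₀ (by positivity)] at this
  have hRnn : 0 ≤ R := re_one_div_one_sub_nonneg hw1.le
  have hlog : 0 < Real.log r ^ 2 := by nlinarith [Real.log_neg hw0 hw1]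
  rw [div_pow, div_le_div_iff₀ (pow_pos (by linarith) 3) hlog, hdw]
  calc (d * r) ^ 3 * Real.log r ^ 2 ≤ d * (r ^ 3 * Real.log r ^ 2) := by
        have : d ^ 3 ≤ d := by nlinarith [pow_le_one₀ hd0.le hd1 (n := 2)]
        rw [mul_pow, mul_assoc]
        exact mul_le_mul_of_nonneg_right this (by positivity)
    _ ≤ d * ((1 - r) * (1 - r)) := by
        rw [← sq]
        exact mul_le_mul_of_nonneg_left (Real.pow_three_mul_log_sq_le hw0 hw1.le) hd0.le
    _ ≤ d * ((R * ‖1 - w‖ ^ 2) * (1 - r)) := by gcongr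
    _ = R * (1 - r) * (d * ‖1 - w‖ ^ 2) := by ring
    _ ≤ R * ‖1 - d * w‖ * ‖1 - d * w‖ ^ 2 := by
        gcongr
        exact mul_norm_one_sub_sq_le hd1 hw1.le
    _ = R * ‖1 - d * w‖ ^ 3 := by ring

lemma norm_pow_mul_one_sub_pow_sq_div_one_sub_inv_pow_three_le {z : ℂ} (hz : ‖z‖ ≤ 1) (X : ℕ) :
    ‖z ^ X * (1 - z ^ X) ^ 2 / (1 - z⁻¹) ^ 3‖ ≤ 4 * ‖z‖ ^ X * (‖z‖ / ‖1 - z‖) ^ 3 := by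
  rcases eq_or_ne z 0 with rfl | hz0
  · rcases X with _ | X <;> simp
  have hinv : ‖1 - z⁻¹‖ = ‖1 - z‖ / ‖z‖ := by
    rw [show 1 - z⁻¹ = (z - 1) * z⁻¹ by field_simp, norm_mul, norm_inv, norm_sub_rev, div_eq_mul_inv]
  have hpow : ‖1 - z ^ X‖ ^ 2 ≤ 4 := by
    have := norm_sub_le (1 : ℂ) (z ^ X)
    rw [norm_one, norm_pow] at this
    nlinarith [pow_le_one₀ (norm_nonneg z) hz (n := X), norm_nonneg (1 - z ^ X)]
  rw [norm_div, norm_mul, norm_pow, norm_pow, norm_pow, hinv, div_eq_mul_inv, ← inv_pow, inv_div]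
  calc ‖z‖ ^ X * ‖1 - z ^ X‖ ^ 2 * (‖z‖ / ‖1 - z‖) ^ 3
      = ‖1 - z ^ X‖ ^ 2 * (‖z‖ ^ X * (‖z‖ / ‖1 - z‖) ^ 3) := by ring
    _ ≤ 4 * (‖z‖ ^ X * (‖z‖ / ‖1 - z‖) ^ 3) := by gcongr
    _ = 4 * ‖z‖ ^ X * (‖z‖ / ‖1 - z‖) ^ 3 := by ring

lemma norm_pow_mul_one_sub_pow_sq_div_le_re_one_div {w : ℂ} (hw0 : 0 < ‖w‖) (hw1 : ‖w‖ < 1)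
    {d : ℝ} (hd0 : 0 < d) (hd1 : d ≤ 1) (X : ℕ) :
    ‖(d * w) ^ X * (1 - (d * w) ^ X) ^ 2 / (1 - (d * w)⁻¹) ^ 3‖
      ≤ 4 * ‖d * w‖ ^ X * ((1 / (1 - w)).re / Real.log ‖w‖ ^ 2) := by
  have hdw : ‖(d : ℂ) * w‖ ≤ 1 := by
    rw [norm_mul, norm_real, Real.norm_of_nonneg hd0.le]
    nlinarith
  calc _ ≤ 4 * ‖d * w‖ ^ X * (‖d * w‖ / ‖1 - d * w‖) ^ 3 :=
        norm_pow_mul_one_sub_pow_sq_div_one_sub_inv_pow_three_le hdw X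
    _ ≤ _ := by
        gcongr
        exact norm_div_norm_one_sub_pow_three_le hw0 hw1 hd0 hd1

end Complex

lemma log_mul_sum_re_le_re_Ffun {q : ℝ} (hq : 1 ≤ q) (κ η : ℕ) (α : Fin κ → ℂ) {s : ℂ}
    (hs : 0 ≤ s.re) :
    Real.log q * ∑ j, (1 / (1 - α j * (q : ℂ) ^ ((1 : ℂ) / 2 - s))).re
      ≤ (Ffun q κ η α s).re + (κ + η) * Real.log q := by
  set u : ℂ := (q : ℂ) ^ (-s)
  have hu : ‖u‖ ≤ 1 := by
    rw [Complex.norm_cpow_eq_rpow_re_of_pos (by linarith), Complex.neg_re]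
    exact Real.rpow_le_one_of_one_le_of_nonpos hq (by linarith)
  have hL : 0 ≤ Real.log q := Real.log_nonneg hq
  have hη : -(η : ℝ) ≤ η * (u / (1 - u)).re := by
    nlinarith [Complex.neg_one_le_re_div_one_sub hu, (Nat.cast_nonneg η : (0 : ℝ) ≤ η)]
  have hF : (Ffun q κ η α s).re = Real.log q * (η * (u / (1 - u)).re - κ
      + ∑ j, (1 / (1 - α j * (q : ℂ) ^ ((1 : ℂ) / 2 - s))).re) := by
    rw [Ffun, Complex.re_ofReal_mul, Complex.add_re, Complex.sub_re, mul_div_assoc,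
      ← Complex.ofReal_natCast η, Complex.re_ofReal_mul, Complex.re_sum, Complex.natCast_re]
  rw [hF]
  nlinarith [mul_le_mul_of_nonneg_left hη hL]

lemma norm_summand_le {q : ℝ} (hq : 1 < q) {a : ℂ} (ha : ‖a‖ = 1) (X : ℕ) (t : ℝ) {σ σ0 : ℝ}
    (h1 : σ0 ≤ σ) (h2 : 1 / 2 < σ0) :
    ‖(a * (q : ℂ) ^ ((1 : ℂ) / 2 - σ - t * Complex.I)) ^ X
        * (1 - (a * (q : ℂ) ^ ((1 : ℂ) / 2 - σ - t * Complex.I)) ^ X) ^ 2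
        / (1 - a⁻¹ * (q : ℂ) ^ ((σ : ℂ) - 1 / 2 + t * Complex.I)) ^ 3‖
      ≤ 4 * q ^ ((X : ℝ) * (1 / 2 - σ)) / ((σ0 - 1 / 2) ^ 2 * Real.log q ^ 2)
          * (1 / (1 - a * (q : ℂ) ^ ((1 : ℂ) / 2 - (σ0 + t * Complex.I)))).re := by
  have hq0 : 0 < q := by linarith
  set w := a * (q : ℂ) ^ ((1 : ℂ) / 2 - (σ0 + t * Complex.I))
  set z := a * (q : ℂ) ^ ((1 : ℂ) / 2 - σ - t * Complex.I)
  set d : ℝ := q ^ (σ0 - σ)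
  have hnorm : ∀ s : ℂ, ‖a * (q : ℂ) ^ s‖ = q ^ s.re := fun s => by
    rw [norm_mul, ha, one_mul, Complex.norm_cpow_eq_rpow_re_of_pos hq0]
  have hw : ‖w‖ = q ^ (1 / 2 - σ0) := by
    rw [hnorm]
    simp
  have hz : z = d * w := by
    simp only [z, w]
    rw [show (1 : ℂ) / 2 - σ - t * Complex.I
          = ((σ0 - σ : ℝ) : ℂ) + (1 / 2 - (σ0 + t * Complex.I)) by push_cast; ring,
      Complex.cpow_add _ _ (by exact_mod_cast hq0.ne'), ← Complex.ofReal_cpow hq0.le]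
    ring
  have hinv : a⁻¹ * (q : ℂ) ^ ((σ : ℂ) - 1 / 2 + t * Complex.I) = z⁻¹ := by
    rw [mul_inv, ← Complex.cpow_neg]
    congr 2
    ring
  have hzX : ‖z‖ ^ X = q ^ ((X : ℝ) * (1 / 2 - σ)) := by
    rw [hnorm, ← Real.rpow_natCast, ← Real.rpow_mul hq0.le, mul_comm]
    simp
  have hlog : Real.log (q ^ (1 / 2 - σ0)) ^ 2 = (σ0 - 1 / 2) ^ 2 * Real.log q ^ 2 := by
    rw [Real.log_rpow hq0]
    ring
  have hw0 : 0 < ‖w‖ := by rw [hw]; positivity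
  have hw1 : ‖w‖ < 1 := by rw [hw]; exact Real.rpow_lt_one_of_one_lt_of_neg hq (by linarith)
  have hd1 : d ≤ 1 := Real.rpow_le_one_of_one_le_of_nonpos hq.le (by linarith)
  have key := Complex.norm_pow_mul_one_sub_pow_sq_div_le_re_one_div hw0 hw1 (by positivity) hd1 X
  rw [← hz, hzX, hw, hlog] at key
  rw [hinv]
  calc _ ≤ _ := key
    _ = _ := by ring

theorem statement11_general (q : ℝ) (hq : 2 ≤ q) (κ : ℕ) (hκ : 1 ≤ κ) (η : ℕ) (hη : η = 0 ∨ η = 1)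
    (α : Fin κ → ℂ) (hα : ∀ j, ‖α j‖ = 1)
    (X : ℕ) (t : ℝ) (σ σ0 : ℝ) (h1 : σ0 ≤ σ) (h2 : 1 / 2 < σ0) :
    ∑ j, ‖
        ((α j * (q : ℂ) ^ ((1 : ℂ) / 2 - (σ : ℂ) - (t : ℂ) * Complex.I)) ^ X
          * (1 - (α j * (q : ℂ) ^ ((1 : ℂ) / 2 - (σ : ℂ) - (t : ℂ) * Complex.I)) ^ X) ^ 2
          / (1 - (α j)⁻¹ * (q : ℂ) ^ ((σ : ℂ) - (1 : ℂ) / 2 + (t : ℂ) * Complex.I)) ^ 3)‖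
      ≤ 4 * q ^ ((X : ℝ) * (1 / 2 - σ)) / ((σ0 - 1 / 2) ^ 2 * Real.log q ^ 3)
          * (|(Ffun q κ η α ((σ0 : ℂ) + (t : ℂ) * Complex.I)).re| + 3 * (κ : ℝ) * Real.log q) := by
  have hq1 : 1 < q := by linarith
  have hL : 0 < Real.log q := Real.log_pos hq1
  set s0 : ℂ := (σ0 : ℂ) + (t : ℂ) * Complex.I
  set R : Fin κ → ℝ := fun j => (1 / (1 - α j * (q : ℂ) ^ ((1 : ℂ) / 2 - s0))).re
  have hsum : Real.log q * ∑ j, R j ≤ |(Ffun q κ η α s0).re| + 3 * κ * Real.log q := by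
    have hF := log_mul_sum_re_le_re_Ffun hq1.le κ η α (s := s0) (by simp [s0]; linarith)
    have hηκ : (η : ℝ) ≤ κ := by exact_mod_cast (by omega : η ≤ κ)
    nlinarith [le_abs_self (Ffun q κ η α s0).re]
  calc _ ≤ ∑ j, 4 * q ^ ((X : ℝ) * (1 / 2 - σ)) / ((σ0 - 1 / 2) ^ 2 * Real.log q ^ 2) * R j :=
        Finset.sum_le_sum fun j _ => norm_summand_le hq1 (hα j) X t h1 h2
    _ = 4 * q ^ ((X : ℝ) * (1 / 2 - σ)) / ((σ0 - 1 / 2) ^ 2 * Real.log q ^ 3)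
          * (Real.log q * ∑ j, R j) := by
        rw [← Finset.mul_sum]
        field_simp
    _ ≤ _ := by gcongr

/-- bound for the sum over zeros appearing in the Dirichlet polynomial
approximation of `L'/L`. -/
theorem statement11 (q : ℝ) (hq : 2 ≤ q) (κ : ℕ) (hκ : 1 ≤ κ) (η : ℕ) (hη : η = 0 ∨ η = 1)
    (α : Fin κ → ℂ) (hα : ∀ j, ‖α j‖ = 1)
    (X : ℕ) (hX : 1 ≤ X) (t : ℝ) (σ σ0 : ℝ) (h1 : σ0 ≤ σ) (h2 : 1 / 2 < σ0) :
    ∑ j, ‖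
        ((α j * (q : ℂ) ^ ((1 : ℂ) / 2 - (σ : ℂ) - (t : ℂ) * Complex.I)) ^ X
          * (1 - (α j * (q : ℂ) ^ ((1 : ℂ) / 2 - (σ : ℂ) - (t : ℂ) * Complex.I)) ^ X) ^ 2
          / (1 - (α j)⁻¹ * (q : ℂ) ^ ((σ : ℂ) - (1 : ℂ) / 2 + (t : ℂ) * Complex.I)) ^ 3)‖
      ≤ 4 * q ^ ((X : ℝ) * (1 / 2 - σ)) / ((σ0 - 1 / 2) ^ 2 * Real.log q ^ 3)
          * (|(Ffun q κ η α ((σ0 : ℂ) + (t : ℂ) * Complex.I)).re| + 3 * (κ : ℝ) * Real.log q) :=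
  statement11_general q hq κ hκ η hη α hα X t σ σ0 h1 h2
end
end

section
/- There is a constant C = C(q) such that for every real K ≥ 2 and every real σ0 > 1/2 with K·(σ0 − 1/2) < 1/(2 log q): | Σ_{P monic irreducible in 𝔽_q[t], deg P ≤ K} |P|^{−2σ0} − log K | ≤ C. -/
open Polynomial Filter MeasureTheory
open scoped Classical BigOperators Topology

noncomputable section

namespace FF

variable (F : Type) [Field F] [Fintype F]

/-- The quadratic residue symbol `(f/P)` for `P` a monic irreducible polynomial:
`0` if `P ∣ f`, `1` if `f` is a nonzero square mod `P`, `-1` otherwise. -/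
def resSymbol (f P : F[X]) : ℤ :=
  if P ∣ f then 0 else if ∃ g : F[X], P ∣ (g ^ 2 - f) then 1 else -1

/-- `χ_D(f) = (D/f)`, the residue symbol extended multiplicatively in the monic
irreducible factors (with multiplicity) of the lower entry `f`. -/
def chi (D f : F[X]) : ℤ :=
  ((UniqueFactorizationMonoid.normalizedFactors f).map (fun P => resSymbol F D P)).prod

/-- The hyperelliptic ensemble `𝓗_n`: monic squarefree polynomials of degree `n`. -/
def Hset (n : ℕ) : Set F[X] := {D | D.Monic ∧ Squarefree D ∧ D.natDegree = n}

/-- The coefficient of `u^m` in `𝓛(u, χ_D) = Σ_{f monic} χ_D(f) u^{deg f}`. -/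
def coeffL (D : F[X]) (m : ℕ) : ℤ :=
  ∑ᶠ f ∈ {f : F[X] | f.Monic ∧ f.natDegree = m}, chi F D f

/-- `𝓛(u, χ_D)`, a polynomial in `u` of degree `deg D - 1`, evaluated at `u : ℂ`. -/
def calL (D : F[X]) (u : ℂ) : ℂ :=
  ∑ m ∈ Finset.range D.natDegree, (coeffL F D m : ℂ) * u ^ m

/-- `L(s, χ_D) = 𝓛(q^{-s}, χ_D)`. -/
def Lfun (D : F[X]) (s : ℂ) : ℂ := calL F D ((Fintype.card F : ℂ) ^ (-s))

/-- `arg L(σ0 + it, χ_D) = -∫_{σ0}^∞ Im (L'/L)(σ + it) dσ`, the continuous branch of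
`Im log L` along the horizontal ray coming from `+∞`. -/
def argL (D : F[X]) (σ0 t : ℝ) : ℝ :=
  -∫ σ in Set.Ioi σ0,
    (deriv (Lfun F D) ((σ : ℂ) + (t : ℂ) * Complex.I) /
      Lfun F D ((σ : ℂ) + (t : ℂ) * Complex.I)).im

/-- The genus `g = (n - 1 - η)/2`, where `η = 1` for even `n` and `η = 0` for odd `n`. -/
def genus (n : ℕ) : ℕ := (n - 1 - if Even n then 1 else 0) / 2

/-- Distance from `t` to the lattice `cℤ`. -/
def latDist (c t : ℝ) : ℝ := ⨅ m : ℤ, |t - (m : ℝ) * c|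

/-- A shift `t = t(n)` is microscopic if `g·dist(t, (4π/log q)ℤ)` stays bounded. -/
def Microscopic (t : ℕ → ℝ) : Prop :=
  ∃ C : ℝ, ∀ n : ℕ,
    (genus n : ℝ) * latDist (4 * Real.pi / Real.log (Fintype.card F)) (t n) ≤ C

/-- A shift `t = t(n)` is mesoscopic if `|t| → 0` but `g·dist(t, (4π/log q)ℤ) → ∞`. -/
def Mesoscopic (t : ℕ → ℝ) : Prop :=
  Tendsto (fun n => |t n|) atTop (𝓝 0) ∧
    Tendsto (fun n : ℕ =>
      (genus n : ℝ) * latDist (4 * Real.pi / Real.log (Fintype.card F)) (t n)) atTop atTop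

/-- A shift is macroscopic if it is constant with absolute value in `(0, 2π)`. -/
def Macroscopic (t : ℕ → ℝ) : Prop :=
  ∃ c : ℝ, (∀ n, t n = c) ∧ 0 < |c| ∧ |c| < 2 * Real.pi

/-- `min { x , 1/|t| }` with the convention `min{x, 1/0} = x`. -/
def mmin (x t : ℝ) : ℝ := if t = 0 then x else min x (1 / |t|)

/-- The mean `𝓜(a⃗, t⃗, x) = Σ_j (a_j/2)·log min{x, 1/(2|t_j|)}`. -/
def meanM {k : ℕ} (a t : Fin k → ℝ) (x : ℝ) : ℝ :=
  ∑ j, a j / 2 * Real.log (mmin x (2 * t j))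

/-- The variance `𝓥_Re(a⃗, t⃗, x)`. -/
def varRe {k : ℕ} (a t : Fin k → ℝ) (x : ℝ) : ℝ :=
  1 / 2 * (∑ j, a j ^ 2) * Real.log x
    + 1 / 2 * ∑ j, a j ^ 2 * Real.log (mmin x (2 * t j))
    + ∑ j1, ∑ j2, (if j1 < j2 then
        a j1 * a j2 * Real.log (mmin x (t j1 - t j2) * mmin x (t j1 + t j2)) else 0)

/-- The variance `𝓥_Im(a⃗, t⃗, x)`. -/
def varIm {k : ℕ} (a t : Fin k → ℝ) (x : ℝ) : ℝ :=
  1 / 2 * (∑ j, a j ^ 2) * Real.log x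
    - 1 / 2 * ∑ j, a j ^ 2 * Real.log (mmin x (2 * t j))
    + ∑ j1, ∑ j2, (if j1 < j2 then
        a j1 * a j2 * Real.log (mmin x (t j1 - t j2) / mmin x (t j1 + t j2)) else 0)

/-- `Φ(b) = (1/√(2π)) ∫_b^∞ e^{-u²/2} du`. -/
def Phi (b : ℝ) : ℝ :=
  (Real.sqrt (2 * Real.pi))⁻¹ * ∫ u in Set.Ioi b, Real.exp (-u ^ 2 / 2)

/-!
Counting by degree the monic irreducible factors of the squarefree polynomial `X ^ q ^ n - X`,
which are exactly the monic irreducibles of degree dividing `n`, gives Gauss's formula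
`∑_{d ∣ n} d π(d) = q ^ n`, where `π(d) = #(monicIrreducibles k d)`; hence
`q ^ d - 2 q ^ (d / 2) ≤ d π(d) ≤ q ^ d`. So the contribution `π(d) q ^ (-2 σ0 d)` of degree `d`
differs from `1 / d` by at most `(2 σ0 - 1) log q + 2 q ^ (-d / 2)`. Over `d ≤ K` the first error
sums to less than `1` by the hypothesis on `K (σ0 - 1 / 2)`, the second is a geometric series,
and `∑_{d ≤ K} 1 / d = log K + O(1)`.
-/

open UniqueFactorizationMonoid
open scoped Finset

theorem finite_setOf_natDegree_le {R : Type*} [Semiring R] [Finite R] (n : ℕ) :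
    {p : R[X] | p.natDegree ≤ n}.Finite := by
  have : Finite (degreeLT R (n + 1)) := .of_equiv _ (degreeLTEquiv R (n + 1)).toEquiv.symm
  refine (Set.toFinite (degreeLT R (n + 1) : Set R[X])).subset fun p hp => ?_
  rw [SetLike.mem_coe, mem_degreeLT]
  exact degree_le_natDegree.trans_lt (WithBot.coe_lt_coe.mpr (Nat.lt_succ_of_le hp))

section MonicIrreducibles

variable (k : Type*) [Field k] [Fintype k]

def monicIrreducibles (d : ℕ) : Finset k[X] :=
  ((finite_setOf_natDegree_le d).subset
    fun (P : k[X]) (hP : P.Monic ∧ Irreducible P ∧ P.natDegree = d) => hP.2.2.le).toFinset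

variable {k}

theorem mem_monicIrreducibles {d : ℕ} {P : k[X]} :
    P ∈ monicIrreducibles k d ↔ P.Monic ∧ Irreducible P ∧ P.natDegree = d :=
  Set.Finite.mem_toFinset _

theorem separable_X_pow_card_pow_sub_X {n : ℕ} (hn : n ≠ 0) :
    (X ^ Fintype.card k ^ n - X : k[X]).Separable :=
  galois_poly_separable (ringChar k) _ ((ringChar.spec k _).mp (by simp [hn]))

theorem mem_normalizedFactors_X_pow_card_pow_sub_X {n : ℕ} (hn : n ≠ 0) {P : k[X]} :
    P ∈ normalizedFactors (X ^ Fintype.card k ^ n - X : k[X]) ↔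
      P.Monic ∧ Irreducible P ∧ P.natDegree ∣ n := by
  rw [Polynomial.mem_normalizedFactors_iff
    (FiniteField.X_pow_card_pow_sub_X_ne_zero k hn Fintype.one_lt_card),
    ← Nat.card_eq_fintype_card]
  constructor
  · rintro ⟨hirr, hm, hdvd⟩
    exact ⟨hm, hirr, hirr.natDegree_dvd_iff_dvd_X_pow_card_pow_sub_X.mpr hdvd⟩
  · rintro ⟨hm, hirr, hdvd⟩
    exact ⟨hirr, hm, hirr.natDegree_dvd_iff_dvd_X_pow_card_pow_sub_X.mp hdvd⟩

variable (k) in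
theorem sum_divisors_mul_card_monicIrreducibles {n : ℕ} (hn : n ≠ 0) :
    ∑ d ∈ n.divisors, d * #(monicIrreducibles k d) = Fintype.card k ^ n := by
  set f : k[X] := X ^ Fintype.card k ^ n - X
  have hq : 1 < Fintype.card k := Fintype.one_lt_card
  have hf0 : f ≠ 0 := FiniteField.X_pow_card_pow_sub_X_ne_zero k hn hq
  have hnodup : (normalizedFactors f).Nodup :=
    (squarefree_iff_nodup_normalizedFactors hf0).mp (separable_X_pow_card_pow_sub_X hn).squarefree
  set S : Finset k[X] := ⟨normalizedFactors f, hnodup⟩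
  have hmem : ∀ P, P ∈ S ↔ P.Monic ∧ Irreducible P ∧ P.natDegree ∣ n := fun P =>
    mem_normalizedFactors_X_pow_card_pow_sub_X hn
  have hdeg : f.natDegree = ∑ P ∈ S, P.natDegree := by
    rw [← natDegree_eq_of_degree_eq (degree_eq_degree_of_associated (prod_normalizedFactors hf0)),
      natDegree_multiset_prod _ (zero_notMem_normalizedFactors _)]
    rfl
  rw [← FiniteField.X_pow_card_pow_sub_X_natDegree_eq k hn hq, hdeg,
    ← Finset.sum_fiberwise_of_maps_to (g := natDegree) (t := n.divisors)
      fun P hP => Nat.mem_divisors.mpr ⟨((hmem P).mp hP).2.2, hn⟩]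
  refine Finset.sum_congr rfl fun d hd => ?_
  have hfib : S.filter (fun P => P.natDegree = d) = monicIrreducibles k d := by
    ext P
    simp only [Finset.mem_filter, hmem, mem_monicIrreducibles]
    constructor
    · rintro ⟨⟨hm, hirr, -⟩, rfl⟩; exact ⟨hm, hirr, rfl⟩
    · rintro ⟨hm, hirr, rfl⟩; exact ⟨⟨hm, hirr, (Nat.mem_divisors.mp hd).1⟩, rfl⟩
  rw [hfib, Finset.sum_congr rfl fun P hP => (mem_monicIrreducibles.mp hP).2.2, Finset.sum_const,
    smul_eq_mul, mul_comm]

theorem card_monicIrreducibles_mul_le (d : ℕ) :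
    d * #(monicIrreducibles k d) ≤ Fintype.card k ^ d := by
  rcases eq_or_ne d 0 with rfl | hd
  · simp
  rw [← sum_divisors_mul_card_monicIrreducibles k hd]
  exact Finset.single_le_sum (f := fun e => e * #(monicIrreducibles k e))
    (fun _ _ => Nat.zero_le _) (Nat.mem_divisors_self d hd)

theorem sum_range_succ_pow_lt_two_mul {q : ℕ} (hq : 2 ≤ q) (m : ℕ) :
    ∑ e ∈ Finset.range (m + 1), q ^ e < 2 * q ^ m := by
  rw [Finset.sum_range_succ, two_mul]
  exact Nat.add_lt_add_right (Nat.geomSum_lt hq fun e he => Finset.mem_range.mp he) _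

theorem le_div_two_of_mem_properDivisors {e d : ℕ} (h : e ∈ d.properDivisors) : e ≤ d / 2 := by
  rw [Nat.le_div_iff_mul_le two_pos]
  calc e * 2 ≤ e * (d / e) := Nat.mul_le_mul_left _ (Nat.one_lt_div_of_mem_properDivisors h)
    _ = d := Nat.mul_div_cancel' (Nat.mem_properDivisors.mp h).1

theorem pow_le_card_monicIrreducibles_mul_add {d : ℕ} (hd : d ≠ 0) :
    Fintype.card k ^ d ≤ d * #(monicIrreducibles k d) + 2 * Fintype.card k ^ (d / 2) := by
  rw [← sum_divisors_mul_card_monicIrreducibles k hd, ← Nat.cons_self_properDivisors hd,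
    Finset.sum_cons]
  refine Nat.add_le_add_left ?_ _
  calc ∑ e ∈ d.properDivisors, e * #(monicIrreducibles k e)
      ≤ ∑ e ∈ d.properDivisors, Fintype.card k ^ e :=
        Finset.sum_le_sum fun e _ => card_monicIrreducibles_mul_le e
    _ ≤ ∑ e ∈ Finset.range (d / 2 + 1), Fintype.card k ^ e :=
        Finset.sum_le_sum_of_subset fun e he =>
          Finset.mem_range.mpr (Nat.lt_succ_of_le (le_div_two_of_mem_properDivisors he))
    _ ≤ 2 * Fintype.card k ^ (d / 2) := (sum_range_succ_pow_lt_two_mul Fintype.one_lt_card _).le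

theorem finsum_mem_monic_irreducible_natDegree_le {M : Type*} [AddCommMonoid M] (g : ℕ → M)
    (N : ℕ) :
    ∑ᶠ P ∈ {P : k[X] | P.Monic ∧ Irreducible P ∧ P.natDegree ≤ N}, g P.natDegree =
      ∑ d ∈ Finset.Icc 1 N, #(monicIrreducibles k d) • g d := by
  have hfin : {P : k[X] | P.Monic ∧ Irreducible P ∧ P.natDegree ≤ N}.Finite :=
    (finite_setOf_natDegree_le N).subset fun P hP => hP.2.2
  rw [finsum_mem_eq_finite_toFinset_sum _ hfin,
    ← Finset.sum_fiberwise_of_maps_to (g := natDegree) (t := Finset.Icc 1 N) fun P hP => by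
      obtain ⟨-, hirr, hN⟩ := hfin.mem_toFinset.mp hP
      exact Finset.mem_Icc.mpr ⟨hirr.natDegree_pos, hN⟩]
  refine Finset.sum_congr rfl fun d hd => ?_
  have hfib : hfin.toFinset.filter (fun P => P.natDegree = d) = monicIrreducibles k d := by
    ext P
    simp only [Finset.mem_filter, Set.Finite.mem_toFinset, Set.mem_ofPred_eq,
      mem_monicIrreducibles]
    constructor
    · rintro ⟨⟨hm, hirr, -⟩, rfl⟩; exact ⟨hm, hirr, rfl⟩
    · rintro ⟨hm, hirr, rfl⟩; exact ⟨⟨hm, hirr, (Finset.mem_Icc.mp hd).2⟩, rfl⟩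
  rw [hfib, Finset.sum_congr rfl fun P hP => congrArg g (mem_monicIrreducibles.mp hP).2.2,
    Finset.sum_const]

end MonicIrreducibles

section MertensBound

open Real

theorem rpow_neg_le_inv {x t : ℝ} (hx : 1 ≤ x) (ht : 1 ≤ t) : x ^ (-t) ≤ x⁻¹ := by
  rw [← rpow_neg_one]
  exact rpow_le_rpow_of_exponent_le hx (by linarith)

theorem one_sub_mul_log_le_mul_rpow_neg {x : ℝ} (hx : 0 < x) (t : ℝ) :
    1 - (t - 1) * log x ≤ x * x ^ (-t) := by
  calc 1 - (t - 1) * log x ≤ exp (log x * (1 + -t)) := by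
        nlinarith [add_one_le_exp (log x * (1 + -t))]
    _ = x * x ^ (-t) := by rw [← rpow_def_of_pos hx, rpow_add hx, rpow_one]

theorem sum_Icc_pow_le_three {ρ : ℝ} (hρ0 : 0 ≤ ρ) (hρ : ρ ≤ 3 / 4) (N : ℕ) :
    ∑ d ∈ Finset.Icc 1 N, ρ ^ d ≤ 3 := by
  rw [← Finset.Ico_add_one_right_eq_Icc]
  calc ∑ d ∈ Finset.Ico 1 (N + 1), ρ ^ d ≤ ρ ^ 1 / (1 - ρ) :=
        geom_sum_Ico_le_of_lt_one hρ0 (by linarith)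
    _ ≤ 3 := by rw [pow_one, div_le_iff₀ (by linarith)]; linarith

variable {q σ0 : ℝ} {a : ℕ → ℝ}

theorem sum_mul_rpow_neg_le_one_add_log (hq : 1 ≤ q) (hσ0 : 1 / 2 ≤ σ0)
    (ha : ∀ d : ℕ, d * a d ≤ q ^ d) {K : ℝ} (hK : 1 ≤ K) :
    ∑ d ∈ Finset.Icc 1 ⌊K⌋₊, a d * (q ^ d) ^ (-(2 * σ0)) ≤ 1 + log K := by
  have hterm : ∀ d ∈ Finset.Icc 1 ⌊K⌋₊, a d * (q ^ d) ^ (-(2 * σ0)) ≤ 1 / d := by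
    intro d hd
    have hd0 : (0 : ℝ) < d := by exact_mod_cast (Finset.mem_Icc.mp hd).1
    have hx : 1 ≤ q ^ d := one_le_pow₀ hq
    refine (le_div_iff₀ hd0).mpr ?_
    calc a d * (q ^ d) ^ (-(2 * σ0)) * d = d * a d * (q ^ d) ^ (-(2 * σ0)) := by ring
      _ ≤ q ^ d * (q ^ d) ^ (-(2 * σ0)) := by gcongr; exact ha d
      _ ≤ q ^ d * (q ^ d)⁻¹ := by gcongr; exact rpow_neg_le_inv hx (by linarith)
      _ = 1 := mul_inv_cancel₀ (by positivity)
  calc ∑ d ∈ Finset.Icc 1 ⌊K⌋₊, a d * (q ^ d) ^ (-(2 * σ0))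
      ≤ ∑ d ∈ Finset.Icc 1 ⌊K⌋₊, 1 / (d : ℝ) := Finset.sum_le_sum hterm
    _ = harmonic ⌊K⌋₊ := by simp [harmonic_eq_sum_Icc]
    _ ≤ 1 + log ⌊K⌋₊ := harmonic_le_one_add_log _
    _ ≤ 1 + log K := by
        gcongr
        · exact_mod_cast Nat.floor_pos.mpr hK
        · exact Nat.floor_le (by linarith)

theorem log_sub_seven_le_sum_mul_rpow_neg (hq : 2 ≤ q) (hσ0 : 1 / 2 ≤ σ0)
    (ha : ∀ d : ℕ, d ≠ 0 → q ^ d ≤ d * a d + 2 * q ^ (d / 2)) {K : ℝ} (hK : 0 < K)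
    (hKσ0 : K * ((2 * σ0 - 1) * log q) ≤ 1) :
    log K - 7 ≤ ∑ d ∈ Finset.Icc 1 ⌊K⌋₊, a d * (q ^ d) ^ (-(2 * σ0)) := by
  set N := ⌊K⌋₊
  set ε := (2 * σ0 - 1) * log q
  set ρ := (√q)⁻¹
  have hε : 0 ≤ ε := mul_nonneg (by linarith) (log_nonneg (by linarith))
  have hρ0 : 0 ≤ ρ := by positivity
  have hρ : ρ ≤ 3 / 4 := by
    have : ρ ^ 2 ≤ 1 / 2 := by
      rw [inv_pow, sq_sqrt (by linarith), one_div]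
      exact inv_anti₀ two_pos hq
    nlinarith
  have hsmall : ∀ d : ℕ, q ^ (d / 2) * (q ^ d) ^ (-(2 * σ0)) ≤ ρ ^ d := by
    intro d
    have hs : 1 ≤ √q := one_le_sqrt.mpr (by linarith)
    have hqd : q ^ d = √q ^ d * √q ^ d := by rw [← mul_pow, mul_self_sqrt (by linarith)]
    calc q ^ (d / 2) * (q ^ d) ^ (-(2 * σ0)) ≤ √q ^ d * (q ^ d)⁻¹ := by
          gcongr
          · calc q ^ (d / 2) = √q ^ (2 * (d / 2)) := by rw [pow_mul, sq_sqrt (by linarith)]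
              _ ≤ √q ^ d := pow_le_pow_right₀ hs (Nat.mul_div_le d 2)
          · exact rpow_neg_le_inv (one_le_pow₀ (by linarith)) (by linarith)
      _ = ρ ^ d := by
          rw [hqd, inv_pow, mul_inv, ← mul_assoc, mul_inv_cancel₀ (by positivity), one_mul]
  have hterm : ∀ d ∈ Finset.Icc 1 N, 1 / d - ε - 2 * ρ ^ d ≤ a d * (q ^ d) ^ (-(2 * σ0)) := by
    intro d hd
    have hd1 : (1 : ℝ) ≤ d := by exact_mod_cast (Finset.mem_Icc.mp hd).1
    have hqd : 0 < q ^ d := by positivity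
    have hmain : 1 - d * ε ≤ q ^ d * (q ^ d) ^ (-(2 * σ0)) := by
      have := one_sub_mul_log_le_mul_rpow_neg hqd (2 * σ0)
      rw [log_pow] at this
      linarith
    have hbound : q ^ d * (q ^ d) ^ (-(2 * σ0)) ≤
        d * (a d * (q ^ d) ^ (-(2 * σ0))) + 2 * ρ ^ d := by
      have := mul_le_mul_of_nonneg_right (ha d (Nat.one_le_iff_ne_zero.mp (Finset.mem_Icc.mp hd).1))
        (rpow_nonneg hqd.le (-(2 * σ0)))
      nlinarith [hsmall d]
    refine le_of_mul_le_mul_left ?_ (by linarith : (0 : ℝ) < d)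
    rw [mul_sub, mul_sub, mul_one_div_cancel (by linarith)]
    nlinarith [pow_nonneg hρ0 d]
  have hsum : ∑ d ∈ Finset.Icc 1 N, (1 / (d : ℝ) - ε - 2 * ρ ^ d) =
      harmonic N - N * ε - 2 * ∑ d ∈ Finset.Icc 1 N, ρ ^ d := by
    simp [Finset.sum_sub_distrib, Finset.mul_sum, harmonic_eq_sum_Icc]
  have hlog : log K ≤ harmonic N := by
    calc log K ≤ log ↑(N + 1) := by
          gcongr; push_cast; exact (Nat.lt_floor_add_one K).le
      _ ≤ harmonic N := log_add_one_le_harmonic N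
  have hNε : N * ε ≤ 1 := (mul_le_mul_of_nonneg_right (Nat.floor_le hK.le) hε).trans hKσ0
  calc log K - 7 ≤ harmonic N - N * ε - 2 * ∑ d ∈ Finset.Icc 1 N, ρ ^ d := by
        linarith [sum_Icc_pow_le_three hρ0 hρ N]
    _ = ∑ d ∈ Finset.Icc 1 N, (1 / (d : ℝ) - ε - 2 * ρ ^ d) := hsum.symm
    _ ≤ ∑ d ∈ Finset.Icc 1 N, a d * (q ^ d) ^ (-(2 * σ0)) := Finset.sum_le_sum hterm

theorem abs_sum_mul_rpow_neg_sub_log_le (hq : 2 ≤ q) (hσ0 : 1 / 2 ≤ σ0)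
    (ha_le : ∀ d : ℕ, d * a d ≤ q ^ d)
    (ha_ge : ∀ d : ℕ, d ≠ 0 → q ^ d ≤ d * a d + 2 * q ^ (d / 2)) {K : ℝ} (hK : 1 ≤ K)
    (hKσ0 : K * ((2 * σ0 - 1) * log q) ≤ 1) :
    |∑ d ∈ Finset.Icc 1 ⌊K⌋₊, a d * (q ^ d) ^ (-(2 * σ0)) - log K| ≤ 7 := by
  have hupper := sum_mul_rpow_neg_le_one_add_log (by linarith) hσ0 ha_le hK
  have hlower := log_sub_seven_le_sum_mul_rpow_neg hq hσ0 ha_ge (by linarith) hKσ0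
  exact abs_le.mpr ⟨by linarith, by linarith [log_nonneg hK]⟩

end MertensBound

/-- `Σ_{deg P ≤ K} |P|^{-2σ0} = log K + O(1)` when `K(σ0 - 1/2) < 1/(2 log q)`. -/
theorem statement12 :
    ∃ C : ℝ, ∀ (K σ0 : ℝ), 2 ≤ K → 1 / 2 < σ0 →
      K * (σ0 - 1 / 2) < 1 / (2 * Real.log (Fintype.card F)) →
      |(∑ᶠ P ∈ {P : F[X] | P.Monic ∧ Irreducible P ∧ (P.natDegree : ℝ) ≤ K},
          ((Fintype.card F : ℝ) ^ P.natDegree : ℝ) ^ (-(2 * σ0)))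
        - Real.log K| ≤ C := by
  refine ⟨7, fun K σ0 hK hσ0 hKσ0 => ?_⟩
  have hq : (2 : ℝ) ≤ Fintype.card F := by exact_mod_cast Fintype.one_lt_card
  have hdeg : {P : F[X] | P.Monic ∧ Irreducible P ∧ (P.natDegree : ℝ) ≤ K} =
      {P | P.Monic ∧ Irreducible P ∧ P.natDegree ≤ ⌊K⌋₊} := by
    ext P
    simp only [Set.mem_ofPred_eq, Nat.le_floor_iff (by linarith : (0 : ℝ) ≤ K)]
  rw [hdeg, finsum_mem_monic_irreducible_natDegree_le
    (fun d => ((Fintype.card F : ℝ) ^ d) ^ (-(2 * σ0)))]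
  simp only [nsmul_eq_mul]
  refine abs_sum_mul_rpow_neg_sub_log_le hq hσ0.le (fun d => ?_) (fun d hd => ?_) (by linarith) ?_
  · exact_mod_cast card_monicIrreducibles_mul_le d
  · exact_mod_cast pow_le_card_monicIrreducibles_mul_add hd
  · have hlog : 0 < Real.log (Fintype.card F) := Real.log_pos (by linarith)
    rw [lt_div_iff₀ (by positivity)] at hKσ0
    linarith

end FF

end
end
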